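/- arXiv:2508.14249 — 8 statements merged into one kernel-verified Lean document; each statement's English description precedes it below -/
import Mathlib

section
/- For all heaps h1 and h2, the expected meld cost satisfies C(h1, h2) ≤ log₂(size h1) + log₂(size h2). -/
inductive Heap (α : Type*) where
  | empty : Heap α
  | node (key : α) (left right : Heap α) : Heap α

/-- The size of a heap counts its empty leaves. -/
def Heap.size {α : Type*} : Heap α → ℕ
  | .empty => 1
  | .node _ l r => l.size + r.size

theorem Heap.size_pos {α : Type*} (h : Heap α) : 0 < h.size := by
  induction h with
  | empty => simp [Heap.size]
  | node k l r hl hr => simp [Heap.size]; omega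

/-- The expected cost of the randomized meld operation. -/
noncomputable def meldCost {α : Type*} [LinearOrder α] : Heap α → Heap α → ℝ
  | .empty, _ => 0
  | .node _ _ _, .empty => 0
  | .node k1 l1 r1, .node k2 l2 r2 =>
    if k1 ≤ k2 then
      1 + (1/2) * meldCost l1 (.node k2 l2 r2) + (1/2) * meldCost r1 (.node k2 l2 r2)
    else
      1 + (1/2) * meldCost (.node k1 l1 r1) l2 + (1/2) * meldCost (.node k1 l1 r1) r2
  termination_by h1 h2 => h1.size + h2.size
  decreasing_by
    · have := Heap.size_pos r1; simp [Heap.size]; omega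
    · have := Heap.size_pos l1; simp [Heap.size]; omega
    · have := Heap.size_pos r2; simp [Heap.size]; omega
    · have := Heap.size_pos l2; simp [Heap.size]; omega

lemma log_split (a b : ℝ) (ha : 1 ≤ a) (hb : 1 ≤ b) :
    1 + (1/2) * Real.logb 2 a + (1/2) * Real.logb 2 b ≤ Real.logb 2 (a + b) := by
  have ha0 : (0:ℝ) < a := by linarith
  have hb0 : (0:ℝ) < b := by linarith
  have hs : 2 * Real.sqrt (a * b) ≤ a + b := by
    have h1 := Real.sq_sqrt ha0.le
    have h2 := Real.sq_sqrt hb0.le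
    have h3 : Real.sqrt (a*b) = Real.sqrt a * Real.sqrt b := Real.sqrt_mul ha0.le b
    nlinarith [sq_nonneg (Real.sqrt a - Real.sqrt b)]
  have key : Real.logb 2 (2 * Real.sqrt (a*b)) = 1 + (1/2) * Real.logb 2 a + (1/2) * Real.logb 2 b := by
    rw [Real.logb_mul two_ne_zero (by positivity),
      Real.logb_self_eq_one (by norm_num : (1:ℝ) < 2)]
    unfold Real.logb
    rw [Real.log_sqrt (by positivity), Real.log_mul ha0.ne' hb0.ne']
    ring
  rw [← key]
  exact Real.logb_le_logb_of_le (by norm_num) (by positivity) hs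

lemma logb_size_nonneg {α : Type*} (h : Heap α) : 0 ≤ Real.logb 2 (h.size : ℝ) :=
  Real.logb_nonneg (by norm_num) (by exact_mod_cast h.size_pos)

lemma one_le_cast_size {α : Type*} (h : Heap α) : (1:ℝ) ≤ (h.size : ℝ) := by
  exact_mod_cast h.size_pos

theorem meldCost_le_log2 {α : Type*} [LinearOrder α] (h1 h2 : Heap α) :
    meldCost h1 h2 ≤ Real.logb 2 (h1.size : ℝ) + Real.logb 2 (h2.size : ℝ) := by
  suffices H : ∀ n (h1 h2 : Heap α), h1.size + h2.size ≤ n →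
      meldCost h1 h2 ≤ Real.logb 2 (h1.size : ℝ) + Real.logb 2 (h2.size : ℝ) from
    H (h1.size + h2.size) h1 h2 le_rfl
  intro n
  induction n with
  | zero =>
    intro h1 h2 hn
    have := h1.size_pos; have := h2.size_pos; omega
  | succ n ih =>
    intro h1 h2 hn
    match h1, h2 with
    | .empty, h2 =>
      rw [meldCost]
      have := logb_size_nonneg (α := α) .empty
      have := logb_size_nonneg h2
      linarith
    | .node k1 l1 r1, .empty =>
      rw [meldCost]
      have := logb_size_nonneg (α := α) .empty
      have := logb_size_nonneg (Heap.node k1 l1 r1)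
      linarith
    | .node k1 l1 r1, .node k2 l2 r2 =>
      rw [meldCost]
      have hsl1 := l1.size_pos; have hsr1 := r1.size_pos
      have hsl2 := l2.size_pos; have hsr2 := r2.size_pos
      split_ifs with hk
      · have ihl := ih l1 (.node k2 l2 r2) (by simp [Heap.size] at hn ⊢; omega)
        have ihr := ih r1 (.node k2 l2 r2) (by simp [Heap.size] at hn ⊢; omega)
        have key := log_split (l1.size : ℝ) (r1.size : ℝ) (one_le_cast_size l1) (one_le_cast_size r1)
        have hcast : ((Heap.node k1 l1 r1).size : ℝ) = (l1.size : ℝ) + (r1.size : ℝ) := by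
          simp [Heap.size]
        rw [hcast]
        linarith
      · have ihl := ih (.node k1 l1 r1) l2 (by simp [Heap.size] at hn ⊢; omega)
        have ihr := ih (.node k1 l1 r1) r2 (by simp [Heap.size] at hn ⊢; omega)
        have key := log_split (l2.size : ℝ) (r2.size : ℝ) (one_le_cast_size l2) (one_le_cast_size r2)
        have hcast : ((Heap.node k2 l2 r2).size : ℝ) = (l2.size : ℝ) + (r2.size : ℝ) := by
          simp [Heap.size]
        rw [hcast]
        linarith
end

section
/- Let Q' : ℕ → ℝ be defined by Q'(0) = 0 and Q'(n) = n − 1 + (2/n)·∑_{i=0}^{n−1} Q'(i) for n ≥ 1. Then for all n ∈ ℕ, Q'(n) = 2·(n+1)·∑_{k=1}^{n} (k−1)/(k·(k+1)). -/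
theorem quicksort_recurrence_sum (Q' : ℕ → ℝ) (h0 : Q' 0 = 0)
    (hrec : ∀ n : ℕ, 1 ≤ n →
      Q' n = (n : ℝ) - 1 + (2 / n) * ∑ i ∈ Finset.range n, Q' i) :
    ∀ n : ℕ, Q' n = 2 * ((n : ℝ) + 1) *
      ∑ k ∈ Finset.Icc 1 n, ((k : ℝ) - 1) / (k * (k + 1)) := by
  have key : ∀ n : ℕ, (n : ℝ) * Q' n =
      (n : ℝ) * ((n : ℝ) - 1) + 2 * ∑ i ∈ Finset.range n, Q' i := by
    intro n
    rcases Nat.eq_zero_or_pos n with h | h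
    · subst h; simp [h0]
    · have hn : (n : ℝ) ≠ 0 := by positivity
      have := hrec n h
      field_simp at this ⊢
      nlinarith [this]
  have step : ∀ n : ℕ, ((n : ℝ) + 1) * Q' (n + 1) = ((n : ℝ) + 2) * Q' n + 2 * n := by
    intro n
    have h1 := key (n + 1)
    have h2 := key n
    rw [Finset.sum_range_succ] at h1
    push_cast at h1
    linarith
  intro n
  induction n with
  | zero => simp [h0]
  | succ n ih =>
    have h1 := step n
    rw [ih] at h1
    have hsum : ∑ k ∈ Finset.Icc 1 (n + 1), ((k : ℝ) - 1) / (k * (k + 1)) =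
        (∑ k ∈ Finset.Icc 1 n, ((k : ℝ) - 1) / (k * (k + 1))) +
          ((n : ℝ) + 1 - 1) / (((n : ℝ) + 1) * ((n : ℝ) + 1 + 1)) := by
      rw [Finset.sum_Icc_succ_top (by omega)]
      push_cast; ring_nf
    rw [hsum]
    have hn1 : ((n : ℝ) + 1) ≠ 0 := by positivity
    have hn2 : ((n : ℝ) + 2) ≠ 0 := by positivity
    push_cast
    field_simp at h1 ⊢
    nlinarith [h1]
end

section
/- For every list l with no duplicate elements over a linearly ordered type, every list in the support of rquick l is sorted in strictly increasing order and is a permutation of l (equivalently, has the same set of elements as l, with equal length). -/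
/-- Randomized quicksort: choose a pivot index uniformly at random, partition the
remaining elements into those smaller and those larger than the pivot, recursively
sort both parts and concatenate. -/
noncomputable def rquick {α : Type*} [LinearOrder α] : List α → PMF (List α)
  | [] => PMF.pure []
  | x :: xs =>
    haveI : Nonempty (Fin (x :: xs).length) := ⟨⟨0, by simp⟩⟩
    (PMF.uniformOfFintype (Fin (x :: xs).length)).bind fun i =>
      let p := (x :: xs).get i
      let rest := (x :: xs).eraseIdx i
      (rquick (rest.filter fun y => decide (y < p))).bind fun sl =>
        (rquick (rest.filter fun y => decide (p < y))).map fun sr =>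
          sl ++ p :: sr
  termination_by l => l.length
  decreasing_by
    all_goals
      calc (List.filter _ ((x :: xs).eraseIdx i)).length
          ≤ ((x :: xs).eraseIdx i).length := List.length_filter_le _ _
        _ < (x :: xs).length := by
            have := i.isLt
            rw [List.length_eraseIdx]
            split <;> simp_all

/-!
Induction along the recursion of `rquick`. The two recursive results are sorted permutations of
the elements below and above the pivot; since the list has no duplicates, these two filters
together with the pivot make up the whole list, and gluing them around the pivot stays sorted.
-/

open List

theorem List.filter_lt_append_filter_gt_perm {α : Type*} [LinearOrder α] {l : List α} {p : α}
    (hp : p ∉ l) : (l.filter (· < p) ++ l.filter (p < ·)).Perm l := by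
  have hgt : l.filter (p < ·) = l.filter (fun y => !decide (y < p)) :=
    filter_congr fun y hy => by
      rcases (ne_of_mem_of_not_mem hy hp).lt_or_gt with h | h <;> simp [h, h.not_gt]
  rw [hgt]
  exact l.filter_append_perm _

theorem List.Pairwise.append_cons_of_lt {α : Type*} [Preorder α] {l₁ l₂ : List α} {p : α}
    (h₁ : l₁.Pairwise (· < ·)) (h₂ : l₂.Pairwise (· < ·)) (hlt : ∀ a ∈ l₁, a < p)
    (hgt : ∀ b ∈ l₂, p < b) : (l₁ ++ p :: l₂).Pairwise (· < ·) := by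
  refine pairwise_append.2 ⟨h₁, pairwise_cons.2 ⟨hgt, h₂⟩, fun a ha b hb => ?_⟩
  obtain rfl | hb := mem_cons.1 hb
  exacts [hlt a ha, (hlt a ha).trans (hgt b hb)]

theorem mem_support_rquick_cons {α : Type*} [LinearOrder α] {x : α} {xs r : List α} :
    r ∈ (rquick (x :: xs)).support ↔ ∃ i : Fin (x :: xs).length,
      ∃ sl ∈ (rquick (((x :: xs).eraseIdx i).filter (· < (x :: xs)[(i : ℕ)]))).support,
      ∃ sr ∈ (rquick (((x :: xs).eraseIdx i).filter ((x :: xs)[(i : ℕ)] < ·))).support,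
      r = sl ++ (x :: xs)[(i : ℕ)] :: sr := by
  rw [rquick]
  simp [eq_comm]

theorem rquick_correct {α : Type*} [LinearOrder α] (l : List α) (hl : l.Nodup)
    (r : List α) (hr : r ∈ (rquick l).support) :
    r.Pairwise (· < ·) ∧ r.Perm l := by
  induction l using rquick.induct generalizing r with
  | case1 =>
    rw [rquick, PMF.support_pure, Set.mem_singleton_iff] at hr
    simp [hr]
  | case2 x xs ih_lt ih_gt =>
    obtain ⟨i, sl, hsl, sr, hsr, rfl⟩ := mem_support_rquick_cons.1 hr
    set p := (x :: xs)[(i : ℕ)]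
    set rest := (x :: xs).eraseIdx i
    have hperm : (p :: rest).Perm (x :: xs) := getElem_cons_eraseIdx_perm i.isLt
    obtain ⟨hp, hrest⟩ := nodup_cons.1 (hperm.nodup_iff.2 hl)
    obtain ⟨hsl_sorted, hsl_perm⟩ := ih_lt i (hrest.filter _) sl hsl
    obtain ⟨hsr_sorted, hsr_perm⟩ := ih_gt i (hrest.filter _) sr hsr
    refine ⟨hsl_sorted.append_cons_of_lt hsr_sorted (fun a ha => ?_) (fun b hb => ?_), ?_⟩
    · simpa using (mem_filter.1 (hsl_perm.subset ha)).2
    · simpa using (mem_filter.1 (hsr_perm.subset hb)).2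
    calc sl ++ p :: sr ~ p :: (sl ++ sr) := perm_middle
      _ ~ p :: rest := ((hsl_perm.append hsr_perm).trans (filter_lt_append_filter_gt_perm hp)).cons p
      _ ~ x :: xs := hperm
end

section
/- For every zip tree t, natural number r, and key k, the tree insert r k t is again a zip tree, its set of keys equals {k} ∪ set t, and both children of insert r k t have rank at most rk t. -/
/-- Ranked binary trees: each node stores a natural-number rank and a key. -/
inductive ZTree (α : Type*) where
  | empty : ZTree α
  | node (rank : ℕ) (key : α) (left right : ZTree α) : ZTree α

namespace ZTree

/-- The rank of the root of a tree, with `rk empty = -1`. -/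
def rk {α : Type*} : ZTree α → ℤ
  | .empty => -1
  | .node r _ _ _ => (r : ℤ)

/-- The set of keys occurring in a tree. -/
def keys {α : Type*} : ZTree α → Set α
  | .empty => ∅
  | .node _ k l r => {k} ∪ l.keys ∪ r.keys

/-- The left child of a tree (the empty tree for the empty tree). -/
def left {α : Type*} : ZTree α → ZTree α
  | .empty => .empty
  | .node _ _ l _ => l

/-- The right child of a tree (the empty tree for the empty tree). -/
def right {α : Type*} : ZTree α → ZTree α
  | .empty => .empty
  | .node _ _ _ r => r

/-- The number of nodes of a tree. -/
def size {α : Type*} : ZTree α → ℕ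
  | .empty => 0
  | .node _ _ l r => l.size + r.size + 1

/-- The zip tree invariant: binary-search-tree property on keys, the rank of a left
child is strictly smaller than the rank of its parent, and the rank of a right child
is at most the rank of its parent. -/
def IsZipTree {α : Type*} [LinearOrder α] : ZTree α → Prop
  | .empty => True
  | .node rank k l r =>
      (∀ x ∈ l.keys, x < k) ∧ (∀ x ∈ r.keys, k < x) ∧
      l.rk < (rank : ℤ) ∧ r.rk ≤ (rank : ℤ) ∧ l.IsZipTree ∧ r.IsZipTree

/-- Zip-tree insertion. -/
def insert {α : Type*} [LinearOrder α] (r : ℕ) (k : α) : ZTree α → ZTree α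
  | .empty => .node r k .empty .empty
  | .node rank key l rt =>
    if k = key then .node rank key l rt
    else if k < key then
      match ZTree.insert r k l with
      | .empty => .node rank key .empty rt
      | .node tr tk tl trr =>
          if (tr : ℤ) < (rank : ℤ) then .node rank key (.node tr tk tl trr) rt
          else .node tr tk tl (.node rank key trr rt)
    else
      match ZTree.insert r k rt with
      | .empty => .node rank key l .empty
      | .node tr tk tl trr =>
          if (tr : ℤ) ≤ (rank : ℤ) then .node rank key l (.node tr tk tl trr)
          else .node tr tk (.node rank key l tl) trr

/-- Zipping two trees. -/
def zip {α : Type*} (k : α) : ZTree α → ZTree α → ZTree α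
  | .empty, .empty => .empty
  | .empty, t => t
  | t, .empty => t
  | .node r1 k1 l1 rt1, .node r2 k2 l2 rt2 =>
    if r1 < r2 then
      .node r2 k2 (ZTree.zip k (.node r1 k1 l1 rt1) l2) rt2
    else
      .node r1 k1 l1 (ZTree.zip k rt1 (.node r2 k2 l2 rt2))
  termination_by t1 t2 => t1.size + t2.size
  decreasing_by
    · simp [ZTree.size]
    · simp [ZTree.size]

/-- Zip-tree deletion. -/
def delete {α : Type*} [LinearOrder α] (k : α) : ZTree α → ZTree α
  | .empty => .empty
  | .node rank key l r =>
    if k < key then .node rank key (ZTree.delete k l) r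
    else if key < k then .node rank key l (ZTree.delete k r)
    else ZTree.zip k l r

end ZTree

/-!
Inserting into a subtree and then either reattaching the result (`linkLeft`, `linkRight`) or
rotating it above the current node preserves the zip-tree invariant, provided the children of the
inserted subtree have rank at most the rank of the subtree it replaced, a bound that holds by an
induction of its own.
-/

namespace ZTree

variable {α : Type*}

/-- The step of `insert` after inserting into the left subtree, which returned `t`. -/
def linkLeft (rank : ℕ) (key : α) (t rt : ZTree α) : ZTree α :=
  match t with
  | .empty => .node rank key .empty rt
  | .node tr tk tl trr =>
      if (tr : ℤ) < (rank : ℤ) then .node rank key (.node tr tk tl trr) rt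
      else .node tr tk tl (.node rank key trr rt)

def linkRight (rank : ℕ) (key : α) (l t : ZTree α) : ZTree α :=
  match t with
  | .empty => .node rank key l .empty
  | .node tr tk tl trr =>
      if (tr : ℤ) ≤ (rank : ℤ) then .node rank key l (.node tr tk tl trr)
      else .node tr tk (.node rank key l tl) trr

theorem keys_linkLeft (rank : ℕ) (key : α) (t rt : ZTree α) :
    (linkLeft rank key t rt).keys = {key} ∪ t.keys ∪ rt.keys := by
  cases t with
  | empty => simp [linkLeft, keys]
  | node tr tk tl trr =>
    dsimp only [linkLeft]
    split_ifs
    · rfl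
    · ext x; simp only [keys, Set.mem_union]; tauto

theorem keys_linkRight (rank : ℕ) (key : α) (l t : ZTree α) :
    (linkRight rank key l t).keys = {key} ∪ l.keys ∪ t.keys := by
  cases t with
  | empty => simp [linkRight, keys]
  | node tr tk tl trr =>
    dsimp only [linkRight]
    split_ifs
    · rfl
    · ext x; simp only [keys, Set.mem_union]; tauto

theorem rk_left_linkLeft_le {rank : ℕ} {key : α} {t : ZTree α} (rt : ZTree α)
    (ht : t.left.rk ≤ rank) : (linkLeft rank key t rt).left.rk ≤ rank := by
  cases t with
  | empty => simp [linkLeft, left, rk]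
  | node tr tk tl trr =>
    dsimp only [linkLeft]
    split_ifs with h
    · exact h.le
    · exact ht

theorem rk_right_linkLeft_le {rank : ℕ} {key : α} {rt : ZTree α} (t : ZTree α)
    (hrt : rt.rk ≤ rank) : (linkLeft rank key t rt).right.rk ≤ rank := by
  cases t with
  | empty => exact hrt
  | node tr tk tl trr =>
    dsimp only [linkLeft]
    split_ifs
    · exact hrt
    · exact le_rfl

theorem rk_left_linkRight_le {rank : ℕ} {key : α} {l : ZTree α} (t : ZTree α)
    (hl : l.rk ≤ rank) : (linkRight rank key l t).left.rk ≤ rank := by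
  cases t with
  | empty => exact hl
  | node tr tk tl trr =>
    dsimp only [linkRight]
    split_ifs
    · exact hl
    · exact le_rfl

theorem rk_right_linkRight_le {rank : ℕ} {key : α} {t : ZTree α} (l : ZTree α)
    (ht : t.right.rk ≤ rank) : (linkRight rank key l t).right.rk ≤ rank := by
  cases t with
  | empty => simp [linkRight, right, rk]
  | node tr tk tl trr =>
    dsimp only [linkRight]
    split_ifs with h
    · exact h
    · exact ht

section LinearOrder

variable [LinearOrder α]

theorem insert_node_of_lt {r rank : ℕ} {k key : α} (l rt : ZTree α) (h : k < key) :
    (node rank key l rt).insert r k = linkLeft rank key (l.insert r k) rt := by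
  simp only [insert, h.ne, h, if_false, if_true]
  rfl

theorem insert_node_of_gt {r rank : ℕ} {k key : α} (l rt : ZTree α) (h : key < k) :
    (node rank key l rt).insert r k = linkRight rank key l (rt.insert r k) := by
  simp only [insert, h.ne', not_lt_of_gt h, if_false]
  rfl

theorem insert_node_self (r rank : ℕ) (key : α) (l rt : ZTree α) :
    (node rank key l rt).insert r key = node rank key l rt := by
  simp [insert]

theorem keys_insert (r : ℕ) (k : α) (t : ZTree α) : (t.insert r k).keys = {k} ∪ t.keys := by
  induction t with
  | empty => simp [insert, keys]
  | node rank key l rt ihl ihr =>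
    rcases lt_trichotomy k key with h | rfl | h
    · rw [insert_node_of_lt _ _ h, keys_linkLeft, ihl]
      ext x; simp only [keys, Set.mem_union]; tauto
    · simp [insert_node_self, keys]
    · rw [insert_node_of_gt _ _ h, keys_linkRight, ihr]
      ext x; simp only [keys, Set.mem_union]; tauto

theorem isZipTree_linkLeft {rank : ℕ} {key : α} {t rt : ZTree α} (hrt : rt.IsZipTree)
    (hrt_keys : ∀ x ∈ rt.keys, key < x) (hrt_rk : rt.rk ≤ rank) (ht : t.IsZipTree)
    (ht_keys : ∀ x ∈ t.keys, x < key) (ht_right : t.right.rk < rank) :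
    (linkLeft rank key t rt).IsZipTree := by
  cases t with
  | empty => exact ⟨by simp [keys], hrt_keys, by simp [rk]; omega, hrt_rk, trivial, hrt⟩
  | node tr tk tl trr =>
    dsimp only [linkLeft]
    split_ifs with h
    · exact ⟨ht_keys, hrt_keys, h, hrt_rk, ht, hrt⟩
    · obtain ⟨htl_keys, htrr_keys, htl_rk, -, htl, htrr⟩ := ht
      have htk : tk < key := ht_keys tk (by simp [keys])
      refine ⟨htl_keys, ?_, htl_rk, not_lt.mp h, htl, ?_, hrt_keys, ht_right, hrt_rk, htrr, hrt⟩
      · rintro x ((rfl | hx) | hx)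
        · exact htk
        · exact htrr_keys x hx
        · exact htk.trans (hrt_keys x hx)
      · exact fun x hx => ht_keys x (by simp [keys, hx])

theorem isZipTree_linkRight {rank : ℕ} {key : α} {l t : ZTree α} (hl : l.IsZipTree)
    (hl_keys : ∀ x ∈ l.keys, x < key) (hl_rk : l.rk < rank) (ht : t.IsZipTree)
    (ht_keys : ∀ x ∈ t.keys, key < x) (ht_left : t.left.rk ≤ rank) :
    (linkRight rank key l t).IsZipTree := by
  cases t with
  | empty => exact ⟨hl_keys, by simp [keys], hl_rk, by simp [rk], hl, trivial⟩
  | node tr tk tl trr =>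
    dsimp only [linkRight]
    split_ifs with h
    · exact ⟨hl_keys, ht_keys, hl_rk, h, hl, ht⟩
    · obtain ⟨htl_keys, htrr_keys, -, htrr_rk, htl, htrr⟩ := ht
      have htk : key < tk := ht_keys tk (by simp [keys])
      refine ⟨?_, htrr_keys, not_le.mp h, htrr_rk, ⟨hl_keys, ?_, hl_rk, ht_left, hl, htl⟩, htrr⟩
      · rintro x ((rfl | hx) | hx)
        · exact htk
        · exact (hl_keys x hx).trans htk
        · exact htl_keys x hx
      · exact fun x hx => ht_keys x (by simp [keys, hx])

theorem IsZipTree.rk_children_insert_le {t : ZTree α} (ht : t.IsZipTree) (r : ℕ) (k : α) :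
    (t.insert r k).left.rk ≤ t.rk ∧ (t.insert r k).right.rk ≤ t.rk := by
  induction t with
  | empty => simp [ZTree.insert, left, right, rk]
  | node rank key l rt ihl ihr =>
    obtain ⟨-, -, hl_rk, hrt_rk, hl, hrt⟩ := ht
    rcases lt_trichotomy k key with h | rfl | h
    · rw [insert_node_of_lt _ _ h]
      exact ⟨rk_left_linkLeft_le _ ((ihl hl).1.trans hl_rk.le), rk_right_linkLeft_le _ hrt_rk⟩
    · rw [insert_node_self]
      exact ⟨hl_rk.le, hrt_rk⟩
    · rw [insert_node_of_gt _ _ h]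
      exact ⟨rk_left_linkRight_le _ hl_rk.le, rk_right_linkRight_le _ ((ihr hrt).2.trans hrt_rk)⟩

theorem IsZipTree.insert {t : ZTree α} (ht : t.IsZipTree) (r : ℕ) (k : α) :
    (t.insert r k).IsZipTree := by
  induction t with
  | empty => simp [ZTree.insert, IsZipTree, keys, rk]; omega
  | node rank key l rt ihl ihr =>
    obtain ⟨hl_keys, hrt_keys, hl_rk, hrt_rk, hl, hrt⟩ := ht
    rcases lt_trichotomy k key with h | rfl | h
    · rw [insert_node_of_lt _ _ h]
      refine isZipTree_linkLeft hrt hrt_keys hrt_rk (ihl hl) ?_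
        ((hl.rk_children_insert_le r k).2.trans_lt hl_rk)
      rw [keys_insert]
      rintro x (rfl | hx)
      · exact h
      · exact hl_keys x hx
    · rw [insert_node_self]
      exact ⟨hl_keys, hrt_keys, hl_rk, hrt_rk, hl, hrt⟩
    · rw [insert_node_of_gt _ _ h]
      refine isZipTree_linkRight hl hl_keys hl_rk (ihr hrt) ?_
        ((hrt.rk_children_insert_le r k).1.trans hrt_rk)
      rw [keys_insert]
      rintro x (rfl | hx)
      · exact h
      · exact hrt_keys x hx

end LinearOrder

end ZTree

theorem insert_correct {α : Type*} [LinearOrder α] (t : ZTree α)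
    (ht : t.IsZipTree) (r : ℕ) (k : α) :
    (ZTree.insert r k t).IsZipTree ∧
    (ZTree.insert r k t).keys = {k} ∪ t.keys ∧
    (ZTree.insert r k t).left.rk ≤ t.rk ∧
    (ZTree.insert r k t).right.rk ≤ t.rk :=
  ⟨ht.insert r k, ZTree.keys_insert r k t, ht.rk_children_insert_le r k⟩
end

section
/- For every zip tree t and key k, the tree delete k t is again a zip tree, rk (delete k t) ≤ rk t, and its set of keys equals (set t) \ {k}. -/
/-!
`zip k l r` merges the right spine of `l` with the left spine of `r`, always putting the root
of higher rank on top, so it keeps exactly the keys of `l` and `r` and its root has rank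
`max l.rk r.rk`. If all keys of `l` precede those of `r`, the merge respects the search order;
on a tie the root of `l` wins, which is what keeps the rank of every left child strictly smaller
(a right child may share its parent's rank). Deleting below the root only replaces a subtree by
one of no larger rank with one key fewer, so the invariant propagates up the search path.
-/

namespace ZTree

variable {α : Type*}

@[simp]
theorem zip_empty_left (k : α) (t : ZTree α) : zip k .empty t = t := by
  cases t <;> simp [zip]

@[simp]
theorem zip_empty_right (k : α) (t : ZTree α) : zip k t .empty = t := by
  cases t <;> simp [zip]

theorem zip_node_node_of_lt (k : α) {r₁ r₂ : ℕ} {k₁ k₂ : α} {l₁ t₁ l₂ t₂ : ZTree α}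
    (h : r₁ < r₂) :
    zip k (.node r₁ k₁ l₁ t₁) (.node r₂ k₂ l₂ t₂) =
      .node r₂ k₂ (zip k (.node r₁ k₁ l₁ t₁) l₂) t₂ := by
  rw [zip, if_pos h]

theorem zip_node_node_of_le (k : α) {r₁ r₂ : ℕ} {k₁ k₂ : α} {l₁ t₁ l₂ t₂ : ZTree α}
    (h : r₂ ≤ r₁) :
    zip k (.node r₁ k₁ l₁ t₁) (.node r₂ k₂ l₂ t₂) =
      .node r₁ k₁ l₁ (zip k t₁ (.node r₂ k₂ l₂ t₂)) := by
  rw [zip, if_neg h.not_gt]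

theorem keys_zip (k : α) (l r : ZTree α) : (zip k l r).keys = l.keys ∪ r.keys := by
  induction l, r using zip.induct with
  | case1 => simp [keys]
  | case2 => simp [keys]
  | case3 => simp [keys]
  | case4 r₁ k₁ l₁ t₁ r₂ k₂ l₂ t₂ h ih =>
    rw [zip_node_node_of_lt k h, keys, ih]
    simp only [keys]
    ac_rfl
  | case5 r₁ k₁ l₁ t₁ r₂ k₂ l₂ t₂ h ih =>
    rw [zip_node_node_of_le k (not_lt.mp h), keys, ih]
    simp only [keys]
    ac_rfl

theorem rk_zip_le (k : α) (l r : ZTree α) : (zip k l r).rk ≤ max l.rk r.rk := by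
  induction l, r using zip.induct with
  | case1 => simp
  | case2 => simp
  | case3 => simp
  | case4 r₁ k₁ l₁ t₁ r₂ k₂ l₂ t₂ h =>
    simp [zip_node_node_of_lt k h, rk]
  | case5 r₁ k₁ l₁ t₁ r₂ k₂ l₂ t₂ h =>
    simp [zip_node_node_of_le k (not_lt.mp h), rk]

variable [LinearOrder α]

theorem IsZipTree.zip (k : α) {l r : ZTree α} (hl : l.IsZipTree) (hr : r.IsZipTree)
    (hlr : ∀ x ∈ l.keys, ∀ y ∈ r.keys, x < y) : (ZTree.zip k l r).IsZipTree := by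
  induction l, r using ZTree.zip.induct with
  | case1 => simp [IsZipTree]
  | case2 => simpa using hr
  | case3 => simpa using hl
  | case4 r₁ k₁ l₁ t₁ r₂ k₂ l₂ t₂ h ih =>
    obtain ⟨hl₂k, ht₂k, hl₂rk, ht₂rk, hl₂, ht₂⟩ := hr
    have hlr₂ : ∀ x ∈ (node r₁ k₁ l₁ t₁).keys, ∀ y ∈ l₂.keys, x < y :=
      fun x hx y hy => hlr x hx y (by simp [keys, hy])
    rw [zip_node_node_of_lt k h]
    refine ⟨?_, ht₂k, ?_, ht₂rk, ih hl hl₂ hlr₂, ht₂⟩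
    · rw [keys_zip]
      rintro x (hx | hx)
      · exact hlr x hx k₂ (by simp [keys])
      · exact hl₂k x hx
    · refine (rk_zip_le k _ _).trans_lt (max_lt ?_ hl₂rk)
      simpa [rk] using h
  | case5 r₁ k₁ l₁ t₁ r₂ k₂ l₂ t₂ h ih =>
    obtain ⟨hl₁k, ht₁k, hl₁rk, ht₁rk, hl₁, ht₁⟩ := hl
    have ht₁r : ∀ x ∈ t₁.keys, ∀ y ∈ (node r₂ k₂ l₂ t₂).keys, x < y :=
      fun x hx y hy => hlr x (by simp [keys, hx]) y hy
    rw [zip_node_node_of_le k (not_lt.mp h)]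
    refine ⟨hl₁k, ?_, hl₁rk, ?_, hl₁, ih ht₁ hr ht₁r⟩
    · rw [keys_zip]
      rintro x (hx | hx)
      · exact ht₁k x hx
      · exact hlr k₁ (by simp [keys]) x hx
    · refine (rk_zip_le k _ _).trans (max_le ht₁rk ?_)
      simpa [rk] using h

theorem keys_delete (k : α) {t : ZTree α} (ht : t.IsZipTree) :
    (delete k t).keys = t.keys \ {k} := by
  induction t with
  | empty => simp [delete, keys]
  | node r key l t ihl iht =>
    obtain ⟨hlk, htk, -, -, hl, ht⟩ := ht
    rcases lt_trichotomy k key with hk | rfl | hk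
    · have hkt : k ∉ t.keys := fun h => (hk.trans (htk k h)).false
      rw [delete, if_pos hk, keys, ihl hl, keys, Set.union_sdiff_distrib,
        Set.union_sdiff_distrib, Set.sdiff_singleton_eq_self hkt,
        Set.sdiff_singleton_eq_self (Set.notMem_singleton_iff.mpr hk.ne)]
    · have hkl : k ∉ l.keys := fun h => (hlk k h).false
      have hkt : k ∉ t.keys := fun h => (htk k h).false
      rw [delete, if_neg (lt_irrefl k), if_neg (lt_irrefl k), keys_zip, keys,
        Set.union_sdiff_distrib, Set.union_sdiff_distrib, Set.sdiff_singleton_eq_self hkl,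
        Set.sdiff_singleton_eq_self hkt, Set.sdiff_self, Set.empty_union]
    · have hkl : k ∉ l.keys := fun h => (hk.trans (hlk k h)).false
      rw [delete, if_neg hk.not_gt, if_pos hk, keys, iht ht, keys, Set.union_sdiff_distrib,
        Set.union_sdiff_distrib, Set.sdiff_singleton_eq_self hkl,
        Set.sdiff_singleton_eq_self (Set.notMem_singleton_iff.mpr hk.ne')]

theorem rk_delete_le (k : α) {t : ZTree α} (ht : t.IsZipTree) : (delete k t).rk ≤ t.rk := by
  cases t with
  | empty => simp [delete]
  | node r key l t =>
    obtain ⟨-, -, hlrk, htrk, -⟩ := ht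
    unfold delete
    split_ifs
    · simp [rk]
    · simp [rk]
    · exact (rk_zip_le k l t).trans (max_le hlrk.le htrk)

theorem IsZipTree.delete (k : α) {t : ZTree α} (ht : t.IsZipTree) :
    (ZTree.delete k t).IsZipTree := by
  induction t with
  | empty => simp [ZTree.delete, IsZipTree]
  | node r key l t ihl iht =>
    obtain ⟨hlk, htk, hlrk, htrk, hl, ht⟩ := ht
    unfold ZTree.delete
    split_ifs
    · refine ⟨?_, htk, (rk_delete_le k hl).trans_lt hlrk, htrk, ihl hl, ht⟩
      rw [keys_delete k hl]
      exact fun x hx => hlk x hx.1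
    · refine ⟨hlk, ?_, hlrk, (rk_delete_le k ht).trans htrk, hl, iht ht⟩
      rw [keys_delete k ht]
      exact fun x hx => htk x hx.1
    · exact IsZipTree.zip k hl ht fun x hx y hy => (hlk x hx).trans (htk y hy)

end ZTree

theorem delete_correct {α : Type*} [LinearOrder α] (t : ZTree α)
    (ht : t.IsZipTree) (k : α) :
    (ZTree.delete k t).IsZipTree ∧
    (ZTree.delete k t).rk ≤ t.rk ∧
    (ZTree.delete k t).keys = t.keys \ {k} :=
  ⟨ht.delete k, ZTree.rk_delete_le k ht, ZTree.keys_delete k ht⟩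
end

section
/- Let n ≥ 1 and let G₁, …, Gₙ be independent ℕ-valued random variables, each geometrically distributed with parameter 1/2, i.e., P(Gⱼ = k) = 2^{−(k+1)} for every k ∈ ℕ. Then the expected value of max(G₁, …, Gₙ) is at most log₂(n) + 1. -/
/-!
By the union bound, `P(max > k) ≤ min(1, n 2^{-(k+1)})`, and summing
these tails with `m = ⌊log₂ n⌋` gives `E[max] ≤ m + n 2^{-m}`. With `x = n / 2^m ∈ [1, 2)`, the
bound `x ≤ 1 + log₂ x` (Bernoulli's inequality for `2^t`, `t ∈ [0, 1]`) turns this into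
`log₂ n + 1`.
-/

open MeasureTheory ProbabilityTheory
open scoped ENNReal

lemma ENNReal.tsum_inv_two_pow_succ : ∑' k : ℕ, (2⁻¹ : ℝ≥0∞) ^ (k + 1) = 1 := by
  simp [ENNReal.tsum_geometric_add_one, ENNReal.one_sub_inv_two, ENNReal.inv_mul_cancel]

lemma ENNReal.natCast_eq_tsum_ite_lt (N : ℕ) :
    (N : ℝ≥0∞) = ∑' k : ℕ, if k < N then 1 else 0 := by
  rw [tsum_eq_sum (s := Finset.range N) (fun k hk => by simpa using hk),
    Finset.sum_ite_of_true fun k hk => Finset.mem_range.1 hk]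
  simp

lemma ENNReal.tsum_le_of_le_one_of_le_mul_inv_two_pow {t : ℕ → ℝ≥0∞} {c : ℝ≥0∞}
    (h_one : ∀ k, t k ≤ 1) (h_geom : ∀ k, t k ≤ c * 2⁻¹ ^ (k + 1)) (m : ℕ) :
    ∑' k, t k ≤ m + c * 2⁻¹ ^ m := by
  rw [← ENNReal.summable.sum_add_tsum_nat_add' (k := m)]
  gcongr
  · calc ∑ k ∈ Finset.range m, t k ≤ ∑ _k ∈ Finset.range m, 1 :=
          Finset.sum_le_sum fun k _ => h_one k
      _ = m := by simp
  · calc ∑' k, t (k + m) ≤ ∑' k, c * 2⁻¹ ^ m * 2⁻¹ ^ (k + 1) := by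
          gcongr with k
          rw [mul_assoc, ← pow_add, show m + (k + 1) = k + m + 1 by omega]
          exact h_geom (k + m)
      _ = c * 2⁻¹ ^ m := by rw [ENNReal.tsum_mul_left, ENNReal.tsum_inv_two_pow_succ, mul_one]

lemma Real.le_one_add_logb_two {x : ℝ} (h1 : 1 ≤ x) (h2 : x ≤ 2) : x ≤ 1 + logb 2 x := by
  have ht0 : 0 ≤ logb 2 x := logb_nonneg one_lt_two h1
  have ht1 : logb 2 x ≤ 1 := by simpa using logb_le_logb_of_le one_lt_two (by linarith) h2
  calc x = (1 + 1 : ℝ) ^ logb 2 x := by norm_num [rpow_logb, (by linarith : (0 : ℝ) < x)]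
    _ ≤ 1 + logb 2 x * 1 := rpow_one_add_le_one_add_mul_self (by norm_num) ht0 ht1
    _ = 1 + logb 2 x := by ring

lemma Real.natLog_two_add_div_two_pow_le {n : ℕ} (hn : n ≠ 0) :
    (Nat.log 2 n : ℝ) + n / 2 ^ Nat.log 2 n ≤ logb 2 n + 1 := by
  set m := Nat.log 2 n
  have hlow : (2 : ℝ) ^ m ≤ n := by exact_mod_cast Nat.pow_log_le_self 2 hn
  have hup : (n : ℝ) < 2 ^ (m + 1) := by exact_mod_cast Nat.lt_pow_succ_log_self one_lt_two n
  have hpos : (0 : ℝ) < 2 ^ m := by positivity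
  have hx := le_one_add_logb_two (x := n / 2 ^ m) ((one_le_div hpos).2 hlow)
    ((div_le_iff₀ hpos).2 (by rw [pow_succ] at hup; linarith))
  rw [logb_div (by positivity) hpos.ne', logb_pow, logb_self_eq_one one_lt_two] at hx
  linarith

section Tails

variable {Ω : Type*} [MeasurableSpace Ω] {μ : Measure Ω}

lemma Finset.measurable_sup_of_countable {ι α : Type*} [Finite ι] [MeasurableSpace α]
    [Countable α] [MeasurableSingletonClass α] [SemilatticeSup α] [OrderBot α] (s : Finset ι)
    {G : ι → Ω → α} (hG : ∀ j, Measurable (G j)) :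
    Measurable fun ω => s.sup fun j => G j ω :=
  (measurable_of_countable fun v : ι → α => s.sup v).comp (measurable_pi_lambda _ hG)

lemma lintegral_natCast_eq_tsum_measure_lt {M : Ω → ℕ} (hM : Measurable M) :
    ∫⁻ ω, (M ω : ℝ≥0∞) ∂μ = ∑' k : ℕ, μ {ω | k < M ω} := by
  have hlt : ∀ k : ℕ, MeasurableSet {ω | k < M ω} := fun k => hM measurableSet_Ioi
  simp_rw [ENNReal.natCast_eq_tsum_ite_lt]
  rw [lintegral_tsum fun k => (measurable_const.ite (hlt k) measurable_const).aemeasurable]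
  congr 1 with k
  simp only [← lintegral_indicator_one (hlt k), Set.indicator_apply, Set.mem_ofPred_eq,
    Pi.one_apply]

lemma measure_lt_eq_tsum_measure_eq {g : Ω → ℕ} (hg : Measurable g) (k : ℕ) :
    μ {ω | k < g ω} = ∑' i : ℕ, μ {ω | g ω = k + 1 + i} := by
  have hunion : {ω | k < g ω} = ⋃ i : ℕ, {ω | g ω = k + 1 + i} := by
    ext ω
    simp only [Set.mem_ofPred_eq, Set.mem_iUnion]
    exact ⟨fun h => ⟨g ω - (k + 1), by omega⟩, fun ⟨i, hi⟩ => by omega⟩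
  rw [hunion, measure_iUnion _ fun i => measurableSet_eq_fun hg measurable_const]
  intro i j hij
  exact Set.disjoint_left.2 fun ω hi hj => hij (by simp_all)

lemma measure_lt_of_geometric {g : Ω → ℕ} (hg : Measurable g)
    (hgeo : ∀ k : ℕ, μ {ω | g ω = k} = 2⁻¹ ^ (k + 1)) (k : ℕ) :
    μ {ω | k < g ω} = 2⁻¹ ^ (k + 1) := by
  simp_rw [measure_lt_eq_tsum_measure_eq hg, hgeo, add_assoc (k + 1),
    pow_add (2⁻¹ : ℝ≥0∞) (k + 1), ENNReal.tsum_mul_left, ENNReal.tsum_inv_two_pow_succ, mul_one]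

lemma measure_lt_sup_le_sum {ι : Type*} (s : Finset ι) (G : ι → Ω → ℕ) (k : ℕ) :
    μ {ω | k < s.sup fun j => G j ω} ≤ ∑ j ∈ s, μ {ω | k < G j ω} := by
  have hunion : {ω | k < s.sup fun j => G j ω} = ⋃ j ∈ s, {ω | k < G j ω} := by
    ext ω
    simp [Finset.lt_sup_iff]
  rw [hunion]
  exact measure_biUnion_finset_le s _

lemma lintegral_sup_le_of_geometric {ι : Type*} [Fintype ι] [IsProbabilityMeasure μ]
    {G : ι → Ω → ℕ} (hG : ∀ j, Measurable (G j))
    (hgeo : ∀ j (k : ℕ), μ {ω | G j ω = k} = 2⁻¹ ^ (k + 1)) (m : ℕ) :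
    ∫⁻ ω, ((Finset.univ.sup fun j => G j ω : ℕ) : ℝ≥0∞) ∂μ ≤ m + Fintype.card ι * 2⁻¹ ^ m := by
  rw [lintegral_natCast_eq_tsum_measure_lt (Finset.univ.measurable_sup_of_countable hG)]
  refine ENNReal.tsum_le_of_le_one_of_le_mul_inv_two_pow (fun k => prob_le_one) (fun k => ?_) m
  calc _ ≤ ∑ j, μ {ω | k < G j ω} := measure_lt_sup_le_sum _ _ _
    _ = Fintype.card ι * 2⁻¹ ^ (k + 1) := by simp [measure_lt_of_geometric (hG _) (hgeo _)]

end Tails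

theorem expected_max_geometric_le_general {Ω : Type*} [MeasurableSpace Ω]
    (μ : Measure Ω) [IsProbabilityMeasure μ]
    (n : ℕ) (hn : 1 ≤ n) (G : Fin n → Ω → ℕ)
    (hmeas : ∀ j, Measurable (G j))
    (hgeo : ∀ (j : Fin n) (k : ℕ), μ {ω | G j ω = k} = (2 : ENNReal)⁻¹ ^ (k + 1)) :
    ∫ ω, ((Finset.univ.sup fun j => G j ω : ℕ) : ℝ) ∂μ ≤ Real.logb 2 n + 1 := by
  set M : Ω → ℕ := fun ω => Finset.univ.sup fun j => G j ω
  have hM : Measurable fun ω => (M ω : ℝ≥0∞) :=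
    measurable_from_nat.comp (Finset.univ.measurable_sup_of_countable hmeas)
  set m := Nat.log 2 n
  have hbound := lintegral_sup_le_of_geometric hmeas hgeo m
  rw [Fintype.card_fin] at hbound
  calc ∫ ω, (M ω : ℝ) ∂μ = (∫⁻ ω, (M ω : ℝ≥0∞) ∂μ).toReal := by
        rw [← integral_toReal hM.aemeasurable (.of_forall fun _ => ENNReal.natCast_lt_top _)]
        simp
    _ ≤ ((m : ℝ≥0∞) + n * 2⁻¹ ^ m).toReal := ENNReal.toReal_mono (by finiteness) hbound
    _ = m + n / 2 ^ m := by
        rw [ENNReal.toReal_add (by finiteness) (by finiteness)]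
        simp [div_eq_mul_inv]
    _ ≤ Real.logb 2 n + 1 := Real.natLog_two_add_div_two_pow_le (by omega)

theorem expected_max_geometric_le {Ω : Type*} [MeasurableSpace Ω]
    (μ : Measure Ω) [IsProbabilityMeasure μ]
    (n : ℕ) (hn : 1 ≤ n) (G : Fin n → Ω → ℕ)
    (hmeas : ∀ j, Measurable (G j))
    (hindep : iIndepFun G μ)
    (hgeo : ∀ (j : Fin n) (k : ℕ), μ {ω | G j ω = k} = (2 : ENNReal)⁻¹ ^ (k + 1)) :
    ∫ ω, ((Finset.univ.sup fun j => G j ω : ℕ) : ℝ) ∂μ ≤ Real.logb 2 n + 1 :=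
  expected_max_geometric_le_general μ n hn G hmeas hgeo
end

section
/- Let B : ℕ × ℕ → ℝ be defined by B(n, 0) = 0 for all n, B(0, i) = 0 for all i, and B(n, i) = ∑_{j=1}^{n} (binom(n, j)/2ⁿ) · (1 + B(j, i−1)) for n ≥ 1 and i ≥ 1. Then B(n, i) ≤ log₂(n) + 1 for all n ≥ 1 and all i ∈ ℕ. -/
/-!
Induct on `i`. For `n ≥ 2` the recursion averages `1 + B(j, i - 1)` against the binomial weights
`binom(n, j) / 2ⁿ`, `j ≥ 1`. Bound `log₂ j` by its tangent line at `j = n / 2`; since the binomial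
distribution has mean `n / 2`, the tangent term averages to `2⁻ⁿ / ln 2`, the contribution of the
missing atom `j = 0`. The inductive step then reduces to `1 / ln 2 ≤ 1 + log₂ n`, i.e. `ln (2n) ≥ 1`,
true for `n ≥ 2`. For `n = 1` the recursion is `B(1, i) = (1 + B(1, i - 1)) / 2`.
-/

open Finset Real

lemma sum_range_succ_eq_add_sum_Icc {M : Type*} [AddCommMonoid M] (f : ℕ → M) (n : ℕ) :
    ∑ j ∈ range (n + 1), f j = f 0 + ∑ j ∈ Icc 1 n, f j := by
  rw [range_eq_Ico, Ico_add_one_right_eq_Icc, ← insert_Icc_add_one_left_eq_Icc n.zero_le,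
    sum_insert (by simp), zero_add]

lemma sum_Icc_choose_div_two_pow (n : ℕ) :
    ∑ j ∈ Icc 1 n, (n.choose j : ℝ) / 2 ^ n = 1 - 1 / 2 ^ n := by
  have h := sum_range_succ_eq_add_sum_Icc (fun j ↦ (n.choose j : ℝ)) n
  simp only [← Nat.cast_sum, Nat.sum_range_choose, Nat.choose_zero_right] at h
  rw [← sum_div, ← Nat.cast_sum, eq_sub_of_add_eq' h.symm]
  push_cast
  field_simp

lemma sum_Icc_choose_div_two_pow_mul (n : ℕ) :
    ∑ j ∈ Icc 1 n, (n.choose j : ℝ) / 2 ^ n * j = n / 2 := by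
  have h := sum_range_succ_eq_add_sum_Icc (fun j ↦ j * n.choose j) n
  rw [Nat.sum_range_mul_choose, zero_mul, zero_add] at h
  rcases n.eq_zero_or_pos with rfl | hn
  · simp
  have h2 : (2 : ℝ) ^ n = 2 * 2 ^ (n - 1) := by rw [← pow_succ', Nat.sub_add_cancel hn]
  calc ∑ j ∈ Icc 1 n, (n.choose j : ℝ) / 2 ^ n * j
      = ((∑ j ∈ Icc 1 n, j * n.choose j : ℕ) : ℝ) / 2 ^ n := by
        push_cast; rw [sum_div]; exact sum_congr rfl fun j _ ↦ by ring
    _ = n / 2 := by rw [← h]; push_cast; rw [h2]; field_simp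

lemma logb_two_le_sub_one_div_log_two {x : ℝ} (hx : 0 < x) : logb 2 x ≤ (x - 1) / log 2 :=
  div_le_div_of_nonneg_right (log_le_sub_one_of_pos hx) (log_nonneg one_le_two)

lemma sum_choose_div_two_pow_mul_one_add_le_logb_add_one {n : ℕ} (hn : 2 ≤ n) (f : ℕ → ℝ)
    (hf : ∀ j ∈ Icc 1 n, f j ≤ logb 2 j + 1) :
    ∑ j ∈ Icc 1 n, (n.choose j : ℝ) / 2 ^ n * (1 + f j) ≤ logb 2 n + 1 := by
  have hn0 : (0 : ℝ) < n := by positivity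
  have hlog2 : 0 < log 2 := log_pos one_lt_two
  have tangent : ∀ j ∈ Icc 1 n, 1 + f j ≤ (1 + logb 2 n) + (2 * j / n - 1) / log 2 := by
    intro j hj
    have hj0 : (0 : ℝ) < j := by exact_mod_cast (mem_Icc.1 hj).1
    have hsplit : logb 2 j = logb 2 (2 * j / n) + logb 2 n - 1 := by
      rw [logb_div (by positivity) hn0.ne', logb_mul two_ne_zero hj0.ne',
        logb_self_eq_one one_lt_two]
      ring
    linarith [hf j hj, logb_two_le_sub_one_div_log_two (by positivity : 0 < 2 * (j : ℝ) / n)]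
  have hconst : 1 / log 2 ≤ 1 + logb 2 n := by
    have h2n : 1 ≤ log 2 + log n := by
      have : (4 : ℝ) ≤ 2 * n := by norm_cast; omega
      rw [← log_mul two_ne_zero hn0.ne', le_log_iff_exp_le (by positivity)]
      linarith [exp_one_lt_d9]
    rwa [div_le_iff₀ hlog2, add_mul, one_mul, logb, div_mul_cancel₀ _ hlog2.ne']
  have hpow : (0 : ℝ) ≤ 1 / 2 ^ n := by positivity
  calc ∑ j ∈ Icc 1 n, (n.choose j : ℝ) / 2 ^ n * (1 + f j)
      ≤ ∑ j ∈ Icc 1 n, (n.choose j : ℝ) / 2 ^ n * ((1 + logb 2 n) + (2 * j / n - 1) / log 2) :=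
        sum_le_sum fun j hj ↦ mul_le_mul_of_nonneg_left (tangent j hj) (by positivity)
    _ = (1 + logb 2 n) * ∑ j ∈ Icc 1 n, (n.choose j : ℝ) / 2 ^ n
          + (2 / n * ∑ j ∈ Icc 1 n, (n.choose j : ℝ) / 2 ^ n * j
            - ∑ j ∈ Icc 1 n, (n.choose j : ℝ) / 2 ^ n) / log 2 := by
        rw [mul_sum, mul_sum, ← sum_sub_distrib, sum_div, ← sum_add_distrib]
        exact sum_congr rfl fun j _ ↦ by field_simp
    _ = (1 + logb 2 n) * (1 - 1 / 2 ^ n) + 1 / 2 ^ n * (1 / log 2) := by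
        rw [sum_Icc_choose_div_two_pow, sum_Icc_choose_div_two_pow_mul]
        field_simp
        ring
    _ ≤ logb 2 n + 1 := by linarith [mul_le_mul_of_nonneg_left hconst hpow]

theorem maxBinom_le_log2_general (B : ℕ → ℕ → ℝ)
    (h0 : ∀ n, B n 0 = 0)
    (hrec : ∀ n i, 1 ≤ n → 1 ≤ i →
      B n i = ∑ j ∈ Finset.Icc 1 n, ((n.choose j : ℝ) / 2 ^ n) * (1 + B j (i - 1))) :
    ∀ n i, 1 ≤ n → B n i ≤ Real.logb 2 n + 1 := by
  intro n i hn
  induction i generalizing n with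
  | zero =>
    rw [h0]
    linarith [logb_nonneg one_lt_two (by exact_mod_cast hn : (1 : ℝ) ≤ n)]
  | succ i ih =>
    rw [hrec n (i + 1) hn (by omega), Nat.add_sub_cancel]
    rcases hn.eq_or_lt with rfl | hn2
    · have := ih 1 le_rfl
      simp only [Nat.cast_one, logb_one, Icc_self, sum_singleton, Nat.choose_self] at this ⊢
      linarith
    · exact sum_choose_div_two_pow_mul_one_add_le_logb_add_one hn2 (B · i)
        fun j hj ↦ ih j (mem_Icc.1 hj).1

theorem maxBinom_le_log2 (B : ℕ → ℕ → ℝ)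
    (h0 : ∀ n, B n 0 = 0) (h0' : ∀ i, B 0 i = 0)
    (hrec : ∀ n i, 1 ≤ n → 1 ≤ i →
      B n i = ∑ j ∈ Finset.Icc 1 n, ((n.choose j : ℝ) / 2 ^ n) * (1 + B j (i - 1))) :
    ∀ n i, 1 ≤ n → B n i ≤ Real.logb 2 n + 1 :=
  maxBinom_le_log2_general B h0 hrec
end

section
/- Let B : ℕ × ℕ → ℝ be defined by B(n, 0) = 0 for all n, B(0, i) = 0 for all i, and B(n, i) = ∑_{j=1}^{n} (binom(n, j)/2ⁿ) · (1 + B(j, i−1)) for n ≥ 1 and i ≥ 1. Let G₁, …, Gₙ be independent ℕ-valued random variables, each geometrically distributed with parameter 1/2, i.e., P(Gⱼ = k) = 2^{−(k+1)} for every k ∈ ℕ. Then for all n ≥ 1 and all i ∈ ℕ, B(n, i) equals the expected value of min(max(G₁, …, Gₙ), i). -/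
/-!
Both sides equal `∑_{t < i} (1 - (1 - 2^{-(t+1)})^n)`.

For the expectation, this is the tail-sum formula `E[min(M, i)] = ∑_{t < i} P(t < M)` for the
maximum `M` of the `Gⱼ`, together with `P(M ≤ t) = P(G₁ ≤ t)^n = (1 - 2^{-(t+1)})^n`
by independence.

For `B`, it follows by induction on `i` from the binomial identity
`∑_j binom(n, j) 2^{-n} (1 - q^j) = 1 - ((1 + q) / 2)^n`: the averaging `q ↦ (1 + q) / 2` sends
`1 - 2^{-s}` to `1 - 2^{-(s+1)}`, and the summand `1` of the recursion is the term `s = 0`.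
-/

open MeasureTheory ProbabilityTheory Finset

theorem natCast_min_eq_sum_ite {R : Type*} [AddCommMonoidWithOne R] (m i : ℕ) :
    ((min m i : ℕ) : R) = ∑ t ∈ range i, if t < m then 1 else 0 := by
  induction i with
  | zero => simp
  | succ i ih =>
    rw [sum_range_succ, ← ih]
    split_ifs with h
    · rw [min_eq_right h.le, min_eq_right (by omega), Nat.cast_succ]
    · rw [min_eq_left (by omega), min_eq_left (by omega), add_zero]

theorem sum_range_inv_two_pow_succ (t : ℕ) :
    ∑ k ∈ range t, (2⁻¹ : ℝ) ^ (k + 1) = 1 - 2⁻¹ ^ t := by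
  induction t with
  | zero => simp
  | succ t ih => rw [sum_range_succ, ih]; ring

theorem sum_Icc_choose_div_two_pow_mul_one_sub_pow (n : ℕ) (q : ℝ) :
    ∑ j ∈ Icc 1 n, (n.choose j / 2 ^ n : ℝ) * (1 - q ^ j) = 1 - ((1 + q) / 2) ^ n := by
  have hrange : ∑ j ∈ Icc 1 n, (n.choose j / 2 ^ n : ℝ) * (1 - q ^ j)
      = ∑ j ∈ range (n + 1), (n.choose j / 2 ^ n : ℝ) * (1 - q ^ j) := by
    rw [Nat.range_eq_Icc_zero_sub_one _ n.add_one_ne_zero, add_tsub_cancel_right,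
      ← insert_Icc_add_one_left_eq_Icc n.zero_le, sum_insert (by simp)]
    simp
  have hchoose : ∑ j ∈ range (n + 1), (n.choose j : ℝ) = 2 ^ n := by
    exact_mod_cast Nat.sum_range_choose n
  have hbinom : ∑ j ∈ range (n + 1), (n.choose j : ℝ) * q ^ j = (1 + q) ^ n := by
    simp [add_comm 1 q, add_pow, mul_comm]
  rw [hrange]
  simp only [div_mul_eq_mul_div, ← sum_div, mul_sub, mul_one, sum_sub_distrib, hchoose, hbinom]
  rw [div_pow]
  field_simp

theorem eq_sum_of_binomial_recursion (B : ℕ → ℕ → ℝ) (h0 : ∀ n, B n 0 = 0)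
    (hrec : ∀ n i, 1 ≤ n → 1 ≤ i →
      B n i = ∑ j ∈ Icc 1 n, ((n.choose j : ℝ) / 2 ^ n) * (1 + B j (i - 1)))
    (i : ℕ) : ∀ n, 1 ≤ n → B n i = ∑ t ∈ range i, (1 - (1 - 2⁻¹ ^ (t + 1)) ^ n) := by
  induction i with
  | zero => simp [h0]
  | succ i ih =>
    intro n hn
    have hsucc : ∀ j ∈ Icc 1 n,
        1 + B j i = ∑ s ∈ range (i + 1), (1 - (1 - (2⁻¹ : ℝ) ^ s) ^ j) := by
      intro j hj
      obtain ⟨hj1, -⟩ := mem_Icc.1 hj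
      rw [ih j hj1, sum_range_succ', pow_zero, sub_self, zero_pow (by omega), sub_zero, add_comm]
    rw [hrec n (i + 1) hn (by omega), Nat.add_sub_cancel, sum_congr rfl fun j hj => by
      rw [hsucc j hj, mul_sum], sum_comm]
    refine sum_congr rfl fun s _ => ?_
    rw [sum_Icc_choose_div_two_pow_mul_one_sub_pow,
      show (1 + (1 - (2⁻¹ : ℝ) ^ s)) / 2 = 1 - 2⁻¹ ^ (s + 1) by ring]

section Probability

variable {Ω : Type*} [MeasurableSpace Ω] {μ : Measure Ω}

theorem integral_min_natCast_eq_sum_measureReal [IsFiniteMeasure μ] {X : Ω → ℕ}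
    (hX : Measurable X) (i : ℕ) :
    ∫ ω, ((min (X ω) i : ℕ) : ℝ) ∂μ = ∑ t ∈ range i, μ.real {ω | t < X ω} := by
  have hset : ∀ t, MeasurableSet {ω | t < X ω} := fun t => hX measurableSet_Ioi
  calc ∫ ω, ((min (X ω) i : ℕ) : ℝ) ∂μ
      = ∫ ω, ∑ t ∈ range i, {ω | t < X ω}.indicator 1 ω ∂μ := by
        congr with ω
        simp only [natCast_min_eq_sum_ite, Set.indicator_apply, Set.mem_ofPred_eq, Pi.one_apply]
    _ = ∑ t ∈ range i, μ.real {ω | t < X ω} := by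
        rw [integral_finsetSum _ fun t _ => (integrable_const 1).indicator (hset t)]
        simp_rw [integral_indicator_one (hset _)]

theorem measureReal_le_of_geometric {X : Ω → ℕ} (hX : Measurable X)
    (hgeo : ∀ k, μ {ω | X ω = k} = 2⁻¹ ^ (k + 1)) (t : ℕ) :
    μ.real {ω | X ω ≤ t} = 1 - 2⁻¹ ^ (t + 1) := by
  have hfib : ∀ k, μ.real (X ⁻¹' {k}) = 2⁻¹ ^ (k + 1) := fun k => by
    simp [measureReal_def, Set.preimage, hgeo]
  have hset : {ω | X ω ≤ t} = X ⁻¹' ↑(range (t + 1)) := by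
    ext ω; simp
  rw [hset, ← sum_measureReal_preimage_singleton _ (fun k _ => hX (measurableSet_singleton k))
    (fun k _ => by simp [Set.preimage, hgeo]), sum_congr rfl fun k _ => hfib k,
    sum_range_inv_two_pow_succ]

theorem measureReal_sup_le_eq_prod {ι : Type*} [Fintype ι] {G : ι → Ω → ℕ}
    (hindep : iIndepFun G μ) (t : ℕ) :
    μ.real {ω | univ.sup (G · ω) ≤ t} = ∏ j, μ.real {ω | G j ω ≤ t} := by
  have hset : {ω | univ.sup (G · ω) ≤ t} = ⋂ j ∈ univ, G j ⁻¹' Set.Iic t := by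
    ext ω; simp
  rw [hset, measureReal_def, hindep.measure_inter_preimage_eq_mul univ
    (fun _ _ => measurableSet_Iic), ENNReal.toReal_prod]
  rfl

theorem measureReal_lt_sup_of_iIndepFun_geometric [IsProbabilityMeasure μ] {ι : Type*}
    [Fintype ι] {G : ι → Ω → ℕ} (hmeas : ∀ j, Measurable (G j)) (hindep : iIndepFun G μ)
    (hgeo : ∀ j k, μ {ω | G j ω = k} = 2⁻¹ ^ (k + 1)) (t : ℕ) :
    μ.real {ω | t < univ.sup (G · ω)} = 1 - (1 - 2⁻¹ ^ (t + 1)) ^ Fintype.card ι := by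
  have hM : Measurable fun ω => univ.sup (G · ω) := by fun_prop
  have hcompl : {ω | t < univ.sup (G · ω)} = {ω | univ.sup (G · ω) ≤ t}ᶜ := by
    ext ω; simp
  rw [hcompl, probReal_compl_eq_one_sub (measurableSet_le hM measurable_const),
    measureReal_sup_le_eq_prod hindep]
  simp [measureReal_le_of_geometric (hmeas _) (hgeo _)]

end Probability

theorem maxBinom_eq_expected_min_max_geometric_general {Ω : Type*} [MeasurableSpace Ω]
    (μ : Measure Ω) [IsProbabilityMeasure μ]
    (B : ℕ → ℕ → ℝ)
    (h0 : ∀ n, B n 0 = 0)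
    (hrec : ∀ n i, 1 ≤ n → 1 ≤ i →
      B n i = ∑ j ∈ Finset.Icc 1 n, ((n.choose j : ℝ) / 2 ^ n) * (1 + B j (i - 1)))
    (n : ℕ) (hn : 1 ≤ n) (G : Fin n → Ω → ℕ)
    (hmeas : ∀ j, Measurable (G j))
    (hindep : iIndepFun G μ)
    (hgeo : ∀ (j : Fin n) (k : ℕ), μ {ω | G j ω = k} = (2 : ENNReal)⁻¹ ^ (k + 1)) :
    ∀ i : ℕ, B n i = ∫ ω, ((min (Finset.univ.sup fun j => G j ω) i : ℕ) : ℝ) ∂μ := by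
  intro i
  rw [eq_sum_of_binomial_recursion B h0 hrec i n hn,
    integral_min_natCast_eq_sum_measureReal (by fun_prop)]
  refine sum_congr rfl fun t _ => ?_
  rw [measureReal_lt_sup_of_iIndepFun_geometric hmeas hindep hgeo, Fintype.card_fin]

theorem maxBinom_eq_expected_min_max_geometric {Ω : Type*} [MeasurableSpace Ω]
    (μ : Measure Ω) [IsProbabilityMeasure μ]
    (B : ℕ → ℕ → ℝ)
    (h0 : ∀ n, B n 0 = 0) (h0' : ∀ i, B 0 i = 0)
    (hrec : ∀ n i, 1 ≤ n → 1 ≤ i →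
      B n i = ∑ j ∈ Finset.Icc 1 n, ((n.choose j : ℝ) / 2 ^ n) * (1 + B j (i - 1)))
    (n : ℕ) (hn : 1 ≤ n) (G : Fin n → Ω → ℕ)
    (hmeas : ∀ j, Measurable (G j))
    (hindep : iIndepFun G μ)
    (hgeo : ∀ (j : Fin n) (k : ℕ), μ {ω | G j ω = k} = (2 : ENNReal)⁻¹ ^ (k + 1)) :
    ∀ i : ℕ, B n i = ∫ ω, ((min (Finset.univ.sup fun j => G j ω) i : ℕ) : ℝ) ∂μ :=
  maxBinom_eq_expected_min_max_geometric_general μ B h0 hrec n hn G hmeas hindep hgeo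
end
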